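/- Let G, τ be as follows: τ(u) ∈ {0,1,deg_G(u)} for all u and no two adjacent vertices both have threshold equal to their degree. Let U be the vertex set of a component of order ≥ 2 of G[{u : τ(u) ∈ {0,1}}] with τ ≡ 1 on U, and suppose G[U] is bipartite with partite sets A and B. Set A' = N_G(B) \ N_G[A], B' = N_G(A) \ N_G[B], C = N_G(A) ∩ N_G(B). If X is a non-monotone target set for (G,τ), then X ∩ (A ∪ A' ∪ C) ≠ ∅ and X ∩ (B ∪ B' ∪ C) ≠ ∅. -/

import Mathlib

open Finset

/-- The non-monotone activation process on `(G, τ)` starting with `X`: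
`X_t = {u : |N_G(u) ∩ X_{t-1}| ≥ τ(u)}` for `t ≥ 1`. -/
def activation {V : Type*} (G : SimpleGraph V) [Fintype V] [DecidableEq V]
    [DecidableRel G.Adj] (τ : V → ℤ) (X : Finset V) : ℕ → Finset V
  | 0 => X
  | t + 1 => Finset.univ.filter
      (fun u => τ u ≤ ((G.neighborFinset u ∩ activation G τ X t).card : ℤ))

/-- `X` is a non-monotone target set for `(G, τ)`. -/
def IsTargetSet {V : Type*} (G : SimpleGraph V) [Fintype V] [DecidableEq V]
    [DecidableRel G.Adj] (τ : V → ℤ) (X : Finset V) : Prop :=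
  ∃ t₀ : ℕ, ∀ t ≥ t₀, activation G τ X t = Finset.univ

/-- Open neighbourhood of a set of vertices: `N_G(S)`. -/
def openNbhd {V : Type*} (G : SimpleGraph V) (S : Set V) : Set V :=
  {v | v ∉ S ∧ ∃ u ∈ S, G.Adj u v}

/-- Closed neighbourhood of a set of vertices: `N_G[S]`. -/
def closedNbhd {V : Type*} (G : SimpleGraph V) (S : Set V) : Set V :=
  S ∪ openNbhd G S

/-- Closed neighbourhood, as a finset. -/
def closedNbhdFinset {V : Type*} (G : SimpleGraph V) [Fintype V] [DecidableEq V]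
    [DecidableRel G.Adj] (U : Finset V) : Finset V :=
  U ∪ Finset.univ.filter (fun v => ∃ u ∈ U, G.Adj u v)

/-- `U` is the vertex set of a connected component of the subgraph of `G` induced by `S`. -/
def IsComponentOf {V : Type*} (G : SimpleGraph V) (S U : Set V) : Prop :=
  U ⊆ S ∧ U.Nonempty ∧ (G.induce U).Connected ∧
    ∀ u ∈ U, ∀ v ∈ S, G.Adj u v → v ∈ U

/-- The subgraph of `G` induced by `S`, as a graph on the subtype `S`. -/
def restrict {V : Type*} (G : SimpleGraph V) (S : Set V) : SimpleGraph S where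
  Adj a b := G.Adj a b
  symm := ⟨fun _ _ h => G.adj_symm h⟩
  loopless := ⟨fun _ h => G.irrefl h⟩

instance {V : Type*} (G : SimpleGraph V) (S : Set V) [h : DecidableRel G.Adj] :
    DecidableRel (restrict G S).Adj := fun a b => h a b


/-!
Write `side A B` for `A ∪ A' ∪ C`. If no vertex of `side A B` is active at time `t`, then no
vertex of `side B A` is active at time `t + 1`: a vertex of `B` has threshold `1` and all its
neighbours lie in `side A B`, while a vertex of `N(A)` outside `U` has threshold equal to its
degree (otherwise it would belong to the component `U`) and has a neighbour in `A`.
Alternating the roles of `A` and `B`, `side A B` stays inactive at all even times if it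
misses `X`; since `A` is nonempty this contradicts `X` being a target set.
-/

def side {V : Type*} (G : SimpleGraph V) (A B : Set V) : Set V :=
  A ∪ (openNbhd G B \ closedNbhd G A) ∪ (openNbhd G A ∩ openNbhd G B)

lemma mem_or_mem_openNbhd_of_mem_side {V : Type*} {G : SimpleGraph V} {A B : Set V} {x : V}
    (hx : x ∈ side G A B) : x ∈ A ∨ (x ∈ openNbhd G B ∧ x ∉ A) := by
  rcases hx with (hxA | ⟨hxB, hxA⟩) | ⟨⟨hxA, -⟩, hxB⟩
  · exact Or.inl hxA
  · exact Or.inr ⟨hxB, fun h => hxA (Or.inl h)⟩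
  · exact Or.inr ⟨hxB, hxA⟩

lemma mem_side_of_adj {V : Type*} [DecidableEq V] {G : SimpleGraph V} {U A B : Finset V}
    (hAB : A ∪ B = U) (hB : ∀ b ∈ B, ∀ b' ∈ B, ¬ G.Adj b b') {b v : V}
    (hb : b ∈ B) (hbv : G.Adj b v) : v ∈ side G A B := by
  by_cases hvU : v ∈ U
  · rcases mem_union.mp (hAB ▸ hvU) with hvA | hvB
    · exact Or.inl (Or.inl hvA)
    · exact absurd hbv (hB b hb v hvB)
  · have hvA : v ∉ A := fun h => hvU (hAB ▸ mem_union_left B h)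
    have hvNB : v ∈ openNbhd G B := ⟨fun h => hvU (hAB ▸ mem_union_right A h), b, hb, hbv⟩
    by_cases hvNA : v ∈ openNbhd G A
    · exact Or.inr ⟨hvNA, hvNB⟩
    · exact Or.inl (Or.inr ⟨hvNB, fun h => h.elim hvA hvNA⟩)

lemma nonempty_of_isComponentOf {V : Type*} [DecidableEq V] {G : SimpleGraph V} {S : Set V}
    {U A B : Finset V} (hU : IsComponentOf G S ↑U) (hcard : 2 ≤ #U)
    (hAB : A ∪ B = U) (hB : ∀ b ∈ B, ∀ b' ∈ B, ¬ G.Adj b b') : A.Nonempty := by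
  obtain ⟨u, hu⟩ := hU.2.1
  have : Nontrivial (↑U : Set V) :=
    Set.nontrivial_coe_sort.mpr (one_lt_card_iff_nontrivial.mp (by omega))
  obtain ⟨⟨w, hw⟩, huw⟩ := hU.2.2.1.preconnected.exists_adj_of_nontrivial ⟨u, hu⟩
  rw [SimpleGraph.comap_adj, Function.Embedding.subtype_apply] at huw
  rcases mem_union.mp (hAB ▸ hu) with huA | huB
  · exact ⟨u, huA⟩
  · rcases mem_union.mp (hAB ▸ hw) with hwA | hwB
    · exact ⟨w, hwA⟩
    · exact absurd huw (hB u huB w hwB)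

section Activation

variable {V : Type*} [Fintype V] [DecidableEq V] {G : SimpleGraph V} [DecidableRel G.Adj]
  {τ : V → ℤ} {X : Finset V} {t : ℕ} {x : V}

lemma mem_activation_succ :
    x ∈ activation G τ X (t + 1) ↔ τ x ≤ #(G.neighborFinset x ∩ activation G τ X t) := by
  simp [activation]

lemma exists_adj_mem_activation_of_mem_activation_succ (hx : x ∈ activation G τ X (t + 1))
    (hτx : 0 < τ x) : ∃ v, G.Adj x v ∧ v ∈ activation G τ X t := by
  obtain ⟨v, hv⟩ : (G.neighborFinset x ∩ activation G τ X t).Nonempty := by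
    rw [← card_pos]
    have := mem_activation_succ.mp hx
    omega
  rw [mem_inter, SimpleGraph.mem_neighborFinset] at hv
  exact ⟨v, hv⟩

lemma mem_activation_of_adj_of_threshold_eq_degree (hx : x ∈ activation G τ X (t + 1))
    (hτx : τ x = G.degree x) {v : V} (hxv : G.Adj x v) : v ∈ activation G τ X t := by
  have hcard : #(G.neighborFinset x) ≤ #(G.neighborFinset x ∩ activation G τ X t) := by
    have := mem_activation_succ.mp hx
    rw [G.card_neighborFinset_eq_degree]
    omega
  have hsub := eq_of_subset_of_card_le inter_subset_left hcard
  exact (mem_inter.mp (hsub ▸ (G.mem_neighborFinset x v).mpr hxv)).2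

end Activation

lemma threshold_eq_degree_of_adj_of_notMem {V : Type*} [Fintype V] {G : SimpleGraph V}
    [DecidableRel G.Adj] {τ : V → ℤ} {U : Finset V}
    (hτ : ∀ u, τ u = 0 ∨ τ u = 1 ∨ τ u = (G.degree u : ℤ))
    (hU : IsComponentOf G {u | τ u = 0 ∨ τ u = 1} ↑U) {u v : V} (hu : u ∈ U)
    (huv : G.Adj u v) (hv : v ∉ U) : τ v = G.degree v := by
  rcases hτ v with h | h | h
  · exact absurd (hU.2.2.2 u hu v (Or.inl h) huv) hv
  · exact absurd (hU.2.2.2 u hu v (Or.inr h) huv) hv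
  · exact h

section Component

variable {V : Type*} [Fintype V] [DecidableEq V] {G : SimpleGraph V} [DecidableRel G.Adj]
  {τ : V → ℤ} {U A B : Finset V}

lemma notMem_side_of_mem_activation_succ
    (hτ : ∀ u, τ u = 0 ∨ τ u = 1 ∨ τ u = (G.degree u : ℤ))
    (hU : IsComponentOf G {u | τ u = 0 ∨ τ u = 1} ↑U) (hone : ∀ u ∈ U, τ u = 1)
    (hAB : A ∪ B = U) (hB : ∀ b ∈ B, ∀ b' ∈ B, ¬ G.Adj b b') {X : Finset V} {t : ℕ}
    (h : ∀ x ∈ activation G τ X t, x ∉ side G A B) :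
    ∀ x ∈ activation G τ X (t + 1), x ∉ side G B A := by
  intro x hx hside
  rcases mem_or_mem_openNbhd_of_mem_side hside with hxB | ⟨⟨hxA, a, haA, hax⟩, hxB⟩
  · have hτx : 0 < τ x := by rw [hone x (hAB ▸ mem_union_right A hxB)]; exact one_pos
    obtain ⟨v, hxv, hv⟩ := exists_adj_mem_activation_of_mem_activation_succ hx hτx
    exact h v hv (mem_side_of_adj hAB hB hxB hxv)
  · have haU : a ∈ U := hAB ▸ mem_union_left B haA
    have hxU : x ∉ U := fun hxU => (mem_union.mp (hAB ▸ hxU)).elim hxA hxB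
    have hτx := threshold_eq_degree_of_adj_of_notMem hτ hU haU hax hxU
    exact h a (mem_activation_of_adj_of_threshold_eq_degree hx hτx hax.symm)
      (Or.inl (Or.inl haA))

lemma notMem_side_of_mem_activation_two_mul
    (hτ : ∀ u, τ u = 0 ∨ τ u = 1 ∨ τ u = (G.degree u : ℤ))
    (hU : IsComponentOf G {u | τ u = 0 ∨ τ u = 1} ↑U) (hone : ∀ u ∈ U, τ u = 1)
    (hAB : A ∪ B = U) (hA : ∀ a ∈ A, ∀ a' ∈ A, ¬ G.Adj a a')
    (hB : ∀ b ∈ B, ∀ b' ∈ B, ¬ G.Adj b b') {X : Finset V} (hX : ∀ x ∈ X, x ∉ side G A B) :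
    ∀ k, ∀ x ∈ activation G τ X (2 * k), x ∉ side G A B := by
  have hBA : B ∪ A = U := by rw [union_comm, hAB]
  intro k
  induction k with
  | zero => exact hX
  | succ k ih =>
    exact notMem_side_of_mem_activation_succ hτ hU hone hBA hA
      (notMem_side_of_mem_activation_succ hτ hU hone hAB hB ih)

lemma exists_mem_side_of_isTargetSet
    (hτ : ∀ u, τ u = 0 ∨ τ u = 1 ∨ τ u = (G.degree u : ℤ))
    (hU : IsComponentOf G {u | τ u = 0 ∨ τ u = 1} ↑U) (hcard : 2 ≤ #U)
    (hone : ∀ u ∈ U, τ u = 1) (hAB : A ∪ B = U) (hA : ∀ a ∈ A, ∀ a' ∈ A, ¬ G.Adj a a')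
    (hB : ∀ b ∈ B, ∀ b' ∈ B, ¬ G.Adj b b') {X : Finset V} (hX : IsTargetSet G τ X) :
    ∃ x ∈ X, x ∈ side G A B := by
  by_contra! hXside
  obtain ⟨a, haA⟩ := nonempty_of_isComponentOf hU hcard hAB hB
  obtain ⟨t₀, ht₀⟩ := hX
  have hinactive := notMem_side_of_mem_activation_two_mul hτ hU hone hAB hA hB hXside t₀
  rw [ht₀ (2 * t₀) (by omega)] at hinactive
  exact hinactive a (mem_univ a) (Or.inl (Or.inl haA))

end Component

theorem stmt_9_general {V : Type*} [Fintype V] [DecidableEq V] (G : SimpleGraph V)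
    [DecidableRel G.Adj] (τ : V → ℤ)
    (hτ : ∀ u, τ u = 0 ∨ τ u = 1 ∨ τ u = (G.degree u : ℤ))
    (U A B : Finset V)
    (hU : IsComponentOf G {u | τ u = 0 ∨ τ u = 1} ↑U)
    (hcard : 2 ≤ U.card)
    (hone : ∀ u ∈ U, τ u = 1)
    (hAB : A ∪ B = U)
    (hA : ∀ a ∈ A, ∀ a' ∈ A, ¬ G.Adj a a')
    (hB : ∀ b ∈ B, ∀ b' ∈ B, ¬ G.Adj b b')
    (X : Finset V) (hX : IsTargetSet G τ X) :
    (∃ x ∈ X, x ∈ (↑A : Set V) ∪ (openNbhd G ↑B \ closedNbhd G ↑A) ∪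
        (openNbhd G ↑A ∩ openNbhd G ↑B)) ∧
    (∃ x ∈ X, x ∈ (↑B : Set V) ∪ (openNbhd G ↑A \ closedNbhd G ↑B) ∪
        (openNbhd G ↑A ∩ openNbhd G ↑B)) := by
  have hBA : B ∪ A = U := by rw [union_comm, hAB]
  refine ⟨exists_mem_side_of_isTargetSet hτ hU hcard hone hAB hA hB hX, ?_⟩
  simpa only [side, Set.inter_comm] using
    exists_mem_side_of_isTargetSet hτ hU hcard hone hBA hB hA hX

theorem stmt_9 {V : Type*} [Fintype V] [DecidableEq V] (G : SimpleGraph V)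
    [DecidableRel G.Adj] (τ : V → ℤ)
    (hτ : ∀ u, τ u = 0 ∨ τ u = 1 ∨ τ u = (G.degree u : ℤ))
    (hedge : ∀ u v, G.Adj u v →
      ¬ (τ u = (G.degree u : ℤ) ∧ τ v = (G.degree v : ℤ)))
    (U A B : Finset V)
    (hU : IsComponentOf G {u | τ u = 0 ∨ τ u = 1} ↑U)
    (hcard : 2 ≤ U.card)
    (hone : ∀ u ∈ U, τ u = 1)
    (hAB : A ∪ B = U) (hdisj : Disjoint A B)
    (hA : ∀ a ∈ A, ∀ a' ∈ A, ¬ G.Adj a a')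
    (hB : ∀ b ∈ B, ∀ b' ∈ B, ¬ G.Adj b b')
    (X : Finset V) (hX : IsTargetSet G τ X) :
    (∃ x ∈ X, x ∈ (↑A : Set V) ∪ (openNbhd G ↑B \ closedNbhd G ↑A) ∪
        (openNbhd G ↑A ∩ openNbhd G ↑B)) ∧
    (∃ x ∈ X, x ∈ (↑B : Set V) ∪ (openNbhd G ↑A \ closedNbhd G ↑B) ∪
        (openNbhd G ↑A ∩ openNbhd G ↑B)) :=
  stmt_9_general G τ hτ U A B hU hcard hone hAB hA hB X hX
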